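/- Let σ ∈ S_k and τ ∈ S_n with σ ≤ τ, and let ⟨σ⟩ be an occurrence of σ in τ. The occurrence poset [⟨σ⟩, τ] is a boolean algebra if and only if at no point are there letters x and x + 1 adjacent in ρ ∖ ⟨σ⟩ for some ρ ∈ [⟨σ⟩, τ]; that is, [⟨σ⟩, τ] is boolean if and only if for every ρ ∈ [⟨σ⟩, τ] there is no pair of consecutive values x, x+1 that occupy adjacent positions in ρ with both x and x+1 lying outside the occurrence ⟨σ⟩. -/

import Mathlib

/-- `f` gives an occurrence of the pattern `σ` in `τ`: the positions `f 0 < f 1 < ⋯`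
carry letters of `τ` in the same relative order as `σ`. -/
def IsOccurrence {k n : ℕ} (σ : Equiv.Perm (Fin k)) (τ : Equiv.Perm (Fin n))
    (f : Fin k → Fin n) : Prop :=
  StrictMono f ∧ ∀ i j : Fin k, σ i < σ j ↔ τ (f i) < τ (f j)

/-- Two sets of kept positions `S, S'` (each containing the marked positions `A`)
determine the same element of the occurrence poset: the words of `τ` read along `S`
and along `S'` are order isomorphic, with the marked positions corresponding. -/
def OccEquiv {n : ℕ} (τ : Equiv.Perm (Fin n)) (A S S' : Finset (Fin n)) : Prop :=
  ∃ g : {x // x ∈ S} ≃o {x // x ∈ S'},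
    (∀ a b : {x // x ∈ S}, τ a.1 < τ b.1 ↔ τ (g a).1 < τ (g b).1) ∧
    (∀ a : {x // x ∈ S}, a.1 ∈ A ↔ (g a).1 ∈ A)

/-- Representatives of elements of the occurrence poset with marked positions `A`
and ground set `U`: sets of kept positions between `A` and `U`. -/
def OccCarrier {n : ℕ} (A U : Finset (Fin n)) := {S : Finset (Fin n) // A ⊆ S ∧ S ⊆ U}

/-- The occurrence poset `[⟨σ⟩, τ]` (with ground set `U`): kept-position sets modulo
order isomorphism respecting the marked occurrence. -/
def OccPoset {n : ℕ} (τ : Equiv.Perm (Fin n)) (A U : Finset (Fin n)) :=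
  Quot (fun S S' : OccCarrier A U => OccEquiv τ A S.1 S'.1)

def occMk {n : ℕ} (τ : Equiv.Perm (Fin n)) (A U : Finset (Fin n)) (S : OccCarrier A U) :
    OccPoset τ A U :=
  Quot.mk _ S

/-- The partial order of the occurrence poset: deletion of unmarked letters. -/
def occLE {n : ℕ} (τ : Equiv.Perm (Fin n)) (A U : Finset (Fin n))
    (q q' : OccPoset τ A U) : Prop :=
  ∃ S S' : OccCarrier A U, q = occMk τ A U S ∧ q' = occMk τ A U S' ∧ S.1 ⊆ S'.1

/-- The bottom element `⟨σ⟩` of the occurrence poset. -/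
def occBot {n : ℕ} (τ : Equiv.Perm (Fin n)) (A U : Finset (Fin n)) (h : A ⊆ U) :
    OccPoset τ A U :=
  occMk τ A U ⟨A, subset_rfl, h⟩

/-- The top element `τ` of the occurrence poset. -/
def occTop {n : ℕ} (τ : Equiv.Perm (Fin n)) (A U : Finset (Fin n)) (h : A ⊆ U) :
    OccPoset τ A U :=
  occMk τ A U ⟨U, h, subset_rfl⟩

/-- `J` is an interval block of the pattern of `τ` restricted to the kept positions `S`:
`J` consists of at least two kept positions, consecutive among `S` both in position and
in value. -/
def IsBlockIn {n : ℕ} (τ : Equiv.Perm (Fin n)) (S J : Finset (Fin n)) : Prop :=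
  J ⊆ S ∧ 2 ≤ J.card ∧
    (∀ x ∈ J, ∀ y ∈ J, ∀ z ∈ S, x ≤ z → z ≤ y → z ∈ J) ∧
    (∀ x ∈ J, ∀ y ∈ J, ∀ z ∈ S, τ x ≤ τ z → τ z ≤ τ y → z ∈ J)

/-- The pair (marked occurrence `A`, permutation given by kept positions `S`) has an
interval block: an interval block disjoint from the occurrence. -/
def PairHasBlock {n : ℕ} (τ : Equiv.Perm (Fin n)) (A S : Finset (Fin n)) : Prop :=
  ∃ J : Finset (Fin n), IsBlockIn τ S J ∧ ∀ p ∈ J, p ∉ A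

/-- An element of the occurrence poset is interval free if (a representative of) it has
no interval block disjoint from the marked occurrence. -/
def occIntervalFree {n : ℕ} (τ : Equiv.Perm (Fin n)) (A U : Finset (Fin n))
    (q : OccPoset τ A U) : Prop :=
  ∃ S : OccCarrier A U, q = occMk τ A U S ∧ ¬ PairHasBlock τ A S.1

theorem OccEquiv.card_eq {n : ℕ} {τ : Equiv.Perm (Fin n)} {A S S' : Finset (Fin n)}
    (h : OccEquiv τ A S S') : S.card = S'.card := by
  obtain ⟨g, -, -⟩ := h
  simpa using Fintype.card_congr g.toEquiv

/-- The rank of an element of the occurrence poset: its number of letters minus `k`. -/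
def occRank {n : ℕ} (τ : Equiv.Perm (Fin n)) (A U : Finset (Fin n)) (k : ℕ) :
    OccPoset τ A U → ℕ :=
  Quot.lift (fun S => S.1.card - k) (fun S S' h => by
    have hc := OccEquiv.card_eq h
    show S.1.card - k = S'.1.card - k
    omega)

/-- Positions `p` and `q` lie in the same region: no position between them (inclusive)
is a marked position. -/
def SameRegion {n : ℕ} (A : Finset (Fin n)) (p q : Fin n) : Prop :=
  ∀ z : Fin n, min p q ≤ z → z ≤ max p q → z ∉ A

/-- The pair (occurrence with marked positions `A`, `τ`) is separated: any two letters in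
the same region are separated in value by a letter of the occurrence. -/
def Separated {n : ℕ} (τ : Equiv.Perm (Fin n)) (A : Finset (Fin n)) : Prop :=
  ∀ p q : Fin n, SameRegion A p q → τ p < τ q → ∃ a ∈ A, τ p < τ a ∧ τ a < τ q

/-- The letters at positions `p, q` (with `τ p < τ q`) are similar: same region, and no
letter of the occurrence lies strictly between them in value. -/
def SimilarPos {n : ℕ} (τ : Equiv.Perm (Fin n)) (A : Finset (Fin n)) (p q : Fin n) : Prop :=
  SameRegion A p q ∧ τ p < τ q ∧ ∀ a ∈ A, ¬ (τ p < τ a ∧ τ a < τ q)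

/-- A group of similar letters: at least two letters, pairwise similar. -/
def IsSimilarGroup {n : ℕ} (τ : Equiv.Perm (Fin n)) (A : Finset (Fin n))
    (G : Finset (Fin n)) : Prop :=
  2 ≤ G.card ∧ ∀ p ∈ G, ∀ q ∈ G, τ p < τ q → SimilarPos τ A p q

/-- A maximal group of similar letters: one contained in no strictly larger group. -/
def IsMaxSimilarGroup {n : ℕ} (τ : Equiv.Perm (Fin n)) (A : Finset (Fin n))
    (G : Finset (Fin n)) : Prop :=
  IsSimilarGroup τ A G ∧ ∀ G' : Finset (Fin n), IsSimilarGroup τ A G' → G ⊆ G' → G' = G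

/-- The occurrence poset is a boolean algebra: isomorphic to the poset of all subsets of
a finite set, ordered by inclusion. -/
def IsBooleanOccPoset {n : ℕ} (τ : Equiv.Perm (Fin n)) (A U : Finset (Fin n)) : Prop :=
  ∃ (m : ℕ) (e : OccPoset τ A U ≃ Finset (Fin m)),
    ∀ q q' : OccPoset τ A U, occLE τ A U q q' ↔ e q ⊆ e q'

/-- The pattern poset `P`: permutations of every length, a permutation of length `m` being
an element of `Equiv.Perm (Fin m)` (its standard form). -/
def PatternPoset := Σ m : ℕ, Equiv.Perm (Fin m)

/-- The order of the pattern poset: pattern containment. -/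
def patternLE (a b : PatternPoset) : Prop :=
  ∃ f : Fin a.1 → Fin b.1, IsOccurrence a.2 b.2 f

/-- `b` covers `a` in the pattern poset: `a < b` and `b` has one letter more than `a`. -/
def patternCovers (a b : PatternPoset) : Prop :=
  patternLE a b ∧ a ≠ b ∧ b.1 = a.1 + 1


/-- Some element of the occurrence poset, given by the kept positions `S`, has two letters
with consecutive values, occupying adjacent positions, both outside the marked occurrence. -/
def HasAdjacentPair {n : ℕ} (τ : Equiv.Perm (Fin n)) (A S : Finset (Fin n)) : Prop :=
  ∃ p ∈ S, ∃ q ∈ S, p ∉ A ∧ q ∉ A ∧ p ≠ q ∧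
    (∀ s ∈ S, ¬ (min p q < s ∧ s < max p q)) ∧
    (∀ s ∈ S, ¬ (min (τ p) (τ q) < τ s ∧ τ s < max (τ p) (τ q)))

/-!
An element of `[⟨σ⟩, τ]` is a set of kept positions up to an order isomorphism that fixes the
occurrence, and such an isomorphism moves a letter only to a *similar* one: a letter outside the
occurrence lying on the same side of every occurrence letter, both in position and in value. So
if no two letters are similar, every element has a unique representative and the poset is the
boolean algebra of subsets of the positions outside the occurrence. Conversely, the swap of two
similar letters `p, q` identifies `⟨σ⟩ ∪ {p}` with `⟨σ⟩ ∪ {q}`, so only three elements lie below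
`⟨σ⟩ ∪ {p, q}`, which is impossible in a boolean algebra. Finally, a pair of similar letters is the
same thing as a pair of adjacent letters with consecutive values in some element of the poset.
-/

open Finset

section LinearOrder

variable {α : Type*} [LinearOrder α]

theorem lt_iff_lt_of_not_between {p q a : α} (hp : a ≠ p) (hq : a ≠ q)
    (h : ¬(min p q < a ∧ a < max p q)) : p < a ↔ q < a := by
  grind

theorem strictMonoOn_swap [DecidableEq α] {s : Set α} {p q : α} (hp : p ∉ s) (hq : q ∉ s)
    (h : ∀ a ∈ s, p < a ↔ q < a) : StrictMonoOn (Equiv.swap p q) (insert p s) := by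
  have hfix : ∀ a ∈ s, Equiv.swap p q a = a := fun a ha =>
    Equiv.swap_apply_of_ne_of_ne (ne_of_mem_of_not_mem ha hp) (ne_of_mem_of_not_mem ha hq)
  rintro a (rfl | ha) b (rfl | hb) hab
  · exact absurd hab (lt_irrefl _)
  · rw [Equiv.swap_apply_left, hfix b hb]
    exact (h b hb).1 hab
  · rw [Equiv.swap_apply_left, hfix a ha]
    have := ne_of_mem_of_not_mem ha hq
    exact lt_of_le_of_ne (not_lt.1 fun hqa => (h a ha).2 hqa |>.asymm hab) this
  · rwa [hfix a ha, hfix b hb]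

theorem StrictMono.val_apply_eq_self_of_mem {A S S' : Finset α} (hS : A ⊆ S)
    {g : {x // x ∈ S} → {x // x ∈ S'}} (hg : StrictMono g)
    (hgA : ∀ a : {x // x ∈ S}, a.1 ∈ A → (g a).1 ∈ A) {a : {x // x ∈ S}} (ha : a.1 ∈ A) :
    (g a).1 = a.1 := by
  set φ := A.orderEmbOfFin rfl
  have hφ : ∀ i, φ i ∈ A := A.orderEmbOfFin_mem rfl
  -- both `g ∘ φ` and `φ` enumerate `A` increasingly
  have key : (fun i => (g ⟨φ i, hS (hφ i)⟩).1) = φ :=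
    A.orderEmbOfFin_unique rfl (fun i => hgA _ (hφ i)) fun i j hij => hg (φ.strictMono hij)
  obtain ⟨i, hi⟩ : a.1 ∈ Set.range φ := by rwa [A.range_orderEmbOfFin]
  obtain rfl : a = ⟨φ i, hS (hφ i)⟩ := Subtype.ext hi.symm
  exact congrFun key i

end LinearOrder

theorem Finset.eq_or_eq_or_eq_or_eq_of_subset_insert_insert {α : Type*} [DecidableEq α]
    {A T : Finset α} {p q : α} (hAT : A ⊆ T) (hT : T ⊆ insert p (insert q A)) :
    T = A ∨ T = insert p A ∨ T = insert q A ∨ T = insert p (insert q A) := by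
  rw [subset_iff] at hAT hT
  by_cases hp : p ∈ T <;> by_cases hq : q ∈ T
  · refine Or.inr (Or.inr (Or.inr ?_))
    ext x; grind
  · refine Or.inr (Or.inl ?_)
    ext x; grind
  · refine Or.inr (Or.inr (Or.inl ?_))
    ext x; grind
  · refine Or.inl ?_
    ext x; grind

theorem not_exists_equiv_finset_of_chain {P α : Type*} {le : P → P → Prop} {b v u : P}
    (hb : ∀ r, le b r) (hvu : le v u) (hbv : b ≠ v) (hvu' : v ≠ u)
    (hdown : ∀ r, le r u → r = b ∨ r = v ∨ r = u) :
    ¬ ∃ e : P ≃ Finset α, ∀ x y, le x y ↔ e x ⊆ e y := by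
  classical
  rintro ⟨e, he⟩
  have heb : e b = ∅ := subset_empty.1 (by simpa using (he b (e.symm ∅)).1 (hb _))
  obtain ⟨x, hx⟩ : (e v).Nonempty :=
    nonempty_iff_ne_empty.2 fun h => hbv (e.injective (heb.trans h.symm))
  have hsub : e v ⊆ e u := (he v u).1 hvu
  -- the relative complement of `e v` in `e u` would be a fourth element below `u`
  have hX : le (e.symm (e u \ e v)) u := (he _ _).2 (by simp)
  rcases hdown _ hX with h | h | h <;> apply_fun e at h <;> simp only [Equiv.apply_symm_apply] at h
  · rw [heb, sdiff_eq_empty_iff_subset] at h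
    exact hvu' (e.injective (Subset.antisymm hsub h))
  · exact (mem_sdiff.1 (h ▸ hx)).2 hx
  · exact (mem_sdiff.1 (h.symm ▸ hsub hx)).2 hx

section OccurrencePoset

variable {n : ℕ} {τ : Equiv.Perm (Fin n)} {A : Finset (Fin n)}

namespace OccEquiv

theorem refl (τ : Equiv.Perm (Fin n)) (A S : Finset (Fin n)) : OccEquiv τ A S S :=
  ⟨OrderIso.refl _, fun _ _ => Iff.rfl, fun _ => Iff.rfl⟩

theorem symm {S S' : Finset (Fin n)} (h : OccEquiv τ A S S') : OccEquiv τ A S' S := by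
  obtain ⟨g, hgτ, hgA⟩ := h
  refine ⟨g.symm, fun a b => ?_, fun a => ?_⟩
  · simpa using (hgτ (g.symm a) (g.symm b)).symm
  · simpa using (hgA (g.symm a)).symm

theorem trans {S S' S'' : Finset (Fin n)} (h : OccEquiv τ A S S') (h' : OccEquiv τ A S' S'') :
    OccEquiv τ A S S'' := by
  obtain ⟨g, hgτ, hgA⟩ := h
  obtain ⟨g', hgτ', hgA'⟩ := h'
  exact ⟨g.trans g', fun a b => (hgτ a b).trans (hgτ' _ _), fun a => (hgA a).trans (hgA' _)⟩

theorem exists_subset {S S' T : Finset (Fin n)} (h : OccEquiv τ A S S') (hT : T ⊆ S)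
    (hAT : A ⊆ T) : ∃ T' ⊆ S', A ⊆ T' ∧ OccEquiv τ A T T' := by
  obtain ⟨g, hgτ, hgA⟩ := h
  let r : {x // x ∈ T} → {x // x ∈ S'} := fun t => g ⟨t.1, hT t.2⟩
  set T' := T.attach.image fun t => (r t).1
  let r' : {x // x ∈ T} → {x // x ∈ T'} := fun t => ⟨(r t).1, mem_image_of_mem _ (mem_attach _ t)⟩
  have hr' : StrictMono r' := fun s t hst => g.strictMono hst
  have hr'_surj : Function.Surjective r' := by
    rintro ⟨y, hy⟩
    obtain ⟨t, -, rfl⟩ := mem_image.1 hy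
    exact ⟨t, rfl⟩
  refine ⟨T', fun y hy => ?_, fun a ha => ?_, hr'.orderIsoOfSurjective r' hr'_surj,
    fun a b => hgτ ⟨a.1, hT a.2⟩ ⟨b.1, hT b.2⟩, fun a => hgA ⟨a.1, hT a.2⟩⟩
  · obtain ⟨t, -, rfl⟩ := mem_image.1 hy
    exact (r t).2
  · have hfix := g.strictMono.val_apply_eq_self_of_mem (hAT.trans hT)
      (fun b hb => (hgA b).1 hb) (a := ⟨a, hT (hAT ha)⟩) ha
    exact mem_image.2 ⟨⟨a, hAT ha⟩, mem_attach _ _, hfix⟩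

end OccEquiv

theorem occMk_eq_iff {U : Finset (Fin n)} {S S' : OccCarrier A U} :
    occMk τ A U S = occMk τ A U S' ↔ OccEquiv τ A S.1 S'.1 :=
  Quot.eq.trans <| Equivalence.eqvGen_iff
    ⟨fun S => OccEquiv.refl τ A S.1, OccEquiv.symm, OccEquiv.trans⟩

theorem exists_eq_occMk_of_occLE {U : Finset (Fin n)} {r : OccPoset τ A U} {S : OccCarrier A U}
    (h : occLE τ A U r (occMk τ A U S)) : ∃ T : OccCarrier A U, T.1 ⊆ S.1 ∧ r = occMk τ A U T := by
  obtain ⟨T, T', rfl, hT', hTT'⟩ := h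
  obtain ⟨T₀, hT₀S, hAT₀, hT₀⟩ := (occMk_eq_iff.1 hT').symm.exists_subset hTT' T.2.1
  exact ⟨⟨T₀, hAT₀, hT₀S.trans S.2.2⟩, hT₀S, occMk_eq_iff.2 hT₀⟩

theorem sameRegion_iff {p q : Fin n} :
    SameRegion A p q ↔ p ∉ A ∧ q ∉ A ∧ ∀ a ∈ A, p < a ↔ q < a := by
  refine ⟨fun h => ⟨h p (min_le_left p q) (le_max_left p q),
    h q (min_le_right p q) (le_max_right p q), fun a ha => ?_⟩, fun ⟨hp, hq, h⟩ z h₁ h₂ hz => ?_⟩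
  · have := h a
    grind
  · have := h z hz
    have := ne_of_mem_of_not_mem hz hp
    have := ne_of_mem_of_not_mem hz hq
    grind

theorem similarPos_iff {p q : Fin n} : SimilarPos τ A p q ↔
    τ p < τ q ∧ p ∉ A ∧ q ∉ A ∧ ∀ a ∈ A, (p < a ↔ q < a) ∧ (τ p < τ a ↔ τ q < τ a) := by
  rw [SimilarPos, sameRegion_iff]
  constructor
  · rintro ⟨⟨hp, hq, hpos⟩, hlt, hval⟩
    refine ⟨hlt, hp, hq, fun a ha => ⟨hpos a ha, ?_⟩⟩
    have := hval a ha
    have := τ.injective.ne (ne_of_mem_of_not_mem ha hp)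
    have := τ.injective.ne (ne_of_mem_of_not_mem ha hq)
    grind
  · rintro ⟨hlt, hp, hq, h⟩
    exact ⟨⟨hp, hq, fun a ha => (h a ha).1⟩, hlt, fun a ha => by grind⟩

theorem similarPos_or_similarPos {p q : Fin n} (hp : p ∉ A) (hq : q ∉ A) (hpq : p ≠ q)
    (h : ∀ a ∈ A, (p < a ↔ q < a) ∧ (τ p < τ a ↔ τ q < τ a)) :
    SimilarPos τ A p q ∨ SimilarPos τ A q p := by
  simp only [similarPos_iff]
  rcases lt_or_gt_of_ne (τ.injective.ne hpq) with hlt | hlt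
  · exact Or.inl ⟨hlt, hp, hq, h⟩
  · exact Or.inr ⟨hlt, hq, hp, fun a ha => ⟨(h a ha).1.symm, (h a ha).2.symm⟩⟩

theorem HasAdjacentPair.exists_similarPos {S : Finset (Fin n)} (hAS : A ⊆ S)
    (h : HasAdjacentPair τ A S) : ∃ p q, SimilarPos τ A p q := by
  obtain ⟨p, -, q, -, hp, hq, hpq, hpos, hval⟩ := h
  have hne : ∀ a ∈ A, a ≠ p ∧ a ≠ q := fun a ha =>
    ⟨ne_of_mem_of_not_mem ha hp, ne_of_mem_of_not_mem ha hq⟩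
  refine (similarPos_or_similarPos hp hq hpq fun a ha => ⟨?_, ?_⟩).elim (⟨p, q, ·⟩) (⟨q, p, ·⟩)
  · exact lt_iff_lt_of_not_between (hne a ha).1 (hne a ha).2 (hpos a (hAS ha))
  · exact lt_iff_lt_of_not_between (τ.injective.ne (hne a ha).1) (τ.injective.ne (hne a ha).2)
      (hval a (hAS ha))

theorem SimilarPos.hasAdjacentPair {p q : Fin n} (h : SimilarPos τ A p q) :
    HasAdjacentPair τ A (insert p (insert q A)) := by
  obtain ⟨hlt, hp, hq, hA⟩ := similarPos_iff.1 h
  refine ⟨p, mem_insert_self _ _, q, mem_insert_of_mem (mem_insert_self _ _), hp, hq,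
    fun e => hlt.ne (congrArg τ e), fun s hs => ?_, fun s hs => ?_⟩ <;>
  · obtain rfl | rfl | hs : s = p ∨ s = q ∨ s ∈ A := by simpa using hs
    all_goals grind

theorem occEquiv_of_perm {S S' : Finset (Fin n)} (π : Equiv.Perm (Fin n))
    (hmem : ∀ x, x ∈ S ↔ π x ∈ S') (hmono : StrictMonoOn π S)
    (hτ : ∀ a ∈ S, ∀ b ∈ S, τ (π a) < τ (π b) ↔ τ a < τ b) (hA : ∀ a ∈ S, a ∈ A ↔ π a ∈ A) :
    OccEquiv τ A S S' :=
  ⟨{ toEquiv := π.subtypeEquiv hmem, map_rel_iff' := fun {a b} => hmono.le_iff_le a.2 b.2 },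
    fun a b => (hτ a a.2 b b.2).symm, fun a => hA a a.2⟩

theorem SimilarPos.occEquiv_insert {p q : Fin n} (h : SimilarPos τ A p q) :
    OccEquiv τ A (insert p A) (insert q A) := by
  obtain ⟨hlt, hp, hq, hA⟩ := similarPos_iff.1 h
  have hfix : ∀ a ∈ A, Equiv.swap p q a = a := fun a ha =>
    Equiv.swap_apply_of_ne_of_ne (ne_of_mem_of_not_mem ha hp) (ne_of_mem_of_not_mem ha hq)
  have hconj : ∀ x, τ (Equiv.swap p q x) = Equiv.swap (τ p) (τ q) (τ x) := fun x => by
    simp [Equiv.swap_apply_apply]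
  have hτmono : StrictMonoOn (Equiv.swap (τ p) (τ q)) (insert (τ p) (τ '' A)) :=
    strictMonoOn_swap (by simpa using hp) (by simpa using hq)
      (Set.forall_mem_image.2 fun a ha => (hA a ha).2)
  refine occEquiv_of_perm (Equiv.swap p q) (fun x => ?_) ?_ (fun a ha b hb => ?_) (fun a ha => ?_)
  · have hpq : p ≠ q := fun e => hlt.ne (congrArg τ e)
    rw [Equiv.swap_apply_def]
    split_ifs <;> grind
  · simpa using strictMonoOn_swap (s := (A : Set (Fin n))) hp hq fun a ha => (hA a ha).1
  · rw [hconj, hconj]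
    exact hτmono.lt_iff_lt (by simpa using ha) (by simpa using hb)
  · obtain rfl | ha := mem_insert.1 ha
    · simp [hp, hq]
    · simp [hfix a ha, ha]

theorem OccEquiv.eq_of_forall_not_similarPos (hno : ∀ p q, ¬ SimilarPos τ A p q)
    {S S' : Finset (Fin n)} (hAS : A ⊆ S) (h : OccEquiv τ A S S') : S = S' := by
  obtain ⟨g, hgτ, hgA⟩ := h
  have hfixA : ∀ {a : {x // x ∈ S}}, a.1 ∈ A → (g a).1 = a.1 :=
    g.strictMono.val_apply_eq_self_of_mem hAS fun b hb => (hgA b).1 hb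
  have hfix : ∀ z, (g z).1 = z.1 := by
    intro z
    by_contra hz
    have hzA : z.1 ∉ A := fun ha => hz (hfixA ha)
    have hgzA : (g z).1 ∉ A := fun ha => hzA ((hgA z).2 ha)
    -- `g` fixes every occurrence letter, so `z` and `g z` lie on the same side of each of them
    have hside : ∀ a ∈ A, (z.1 < a ↔ (g z).1 < a) ∧ (τ z.1 < τ a ↔ τ (g z).1 < τ a) := by
      intro a ha
      have hga : (g ⟨a, hAS ha⟩).1 = a := hfixA ha
      constructor
      · conv_rhs => rw [← hga]
        exact (g.lt_iff_lt (x := z) (y := ⟨a, hAS ha⟩)).symm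
      · conv_rhs => rw [← hga]
        exact hgτ z ⟨a, hAS ha⟩
    rcases similarPos_or_similarPos hzA hgzA (Ne.symm hz) hside with h | h
    exacts [hno _ _ h, hno _ _ h]
  refine eq_of_subset_of_card_le (fun x hx => ?_) (OccEquiv.card_eq ⟨g, hgτ, hgA⟩).ge
  simpa [hfix] using (g ⟨x, hx⟩).2

theorem SimilarPos.not_isBooleanOccPoset {p q : Fin n} (h : SimilarPos τ A p q) :
    ¬ IsBooleanOccPoset τ A univ := by
  obtain ⟨hlt, hp, hq, -⟩ := similarPos_iff.1 h
  have hqp : q ∉ insert p A := by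
    simpa [hq] using fun e : q = p => hlt.ne (congrArg τ e.symm)
  let mk (T : Finset (Fin n)) (hT : A ⊆ T) : OccPoset τ A univ :=
    occMk τ A univ ⟨T, hT, subset_univ T⟩
  have hAp : A ⊆ insert p A := subset_insert p A
  have hApq : A ⊆ insert q (insert p A) := hAp.trans (subset_insert q _)
  have hswap : mk _ hAp = mk (insert q A) (subset_insert q A) := occMk_eq_iff.2 h.occEquiv_insert
  rintro ⟨m, e, he⟩
  refine not_exists_equiv_finset_of_chain (b := mk A subset_rfl) (v := mk _ hAp)
    (u := mk _ hApq) (fun r => ?_) ⟨_, _, rfl, rfl, subset_insert q _⟩ (fun hbv => ?_)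
    (fun hvu => ?_) (fun r hr => ?_) ⟨e, he⟩
  · obtain ⟨S, rfl⟩ := Quot.exists_rep r
    exact ⟨_, S, rfl, rfl, S.2.1⟩
  · simpa [card_insert_of_notMem hp] using (occMk_eq_iff.1 hbv).card_eq
  · simpa [card_insert_of_notMem hp, card_insert_of_notMem hqp] using
      (occMk_eq_iff.1 hvu).card_eq
  · obtain ⟨T, hT, rfl⟩ := exists_eq_occMk_of_occLE hr
    obtain hTA | hTq | hTp | hTqp := eq_or_eq_or_eq_or_eq_of_subset_insert_insert T.2.1 hT
    · exact Or.inl (congrArg _ (Subtype.ext hTA))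
    · exact Or.inr (Or.inl (hswap.symm ▸ congrArg _ (Subtype.ext hTq)))
    · exact Or.inr (Or.inl (congrArg _ (Subtype.ext hTp)))
    · exact Or.inr (Or.inr (congrArg _ (Subtype.ext hTqp)))

def occCarrierEquivFinsetCompl (A : Finset (Fin n)) :
    OccCarrier A univ ≃ Finset {x // x ∉ A} where
  toFun S := S.1.subtype (· ∉ A)
  invFun X := ⟨A ∪ X.map (Function.Embedding.subtype _), subset_union_left, subset_univ _⟩
  left_inv S := Subtype.ext <| by
    ext x
    by_cases hx : x ∈ A
    · simp [hx, S.2.1 hx]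
    · simp [hx]
  right_inv X := by
    ext ⟨x, hx⟩
    simp [hx]

theorem mem_occCarrierEquivFinsetCompl {S : OccCarrier A univ} {x : {x // x ∉ A}} :
    x ∈ occCarrierEquivFinsetCompl A S ↔ x.1 ∈ S.1 :=
  mem_subtype

theorem occCarrierEquivFinsetCompl_subset_iff {S S' : OccCarrier A univ} :
    occCarrierEquivFinsetCompl A S ⊆ occCarrierEquivFinsetCompl A S' ↔ S.1 ⊆ S'.1 := by
  simp only [subset_iff, mem_occCarrierEquivFinsetCompl, Subtype.forall]
  exact ⟨fun h x hx => if hxA : x ∈ A then S'.2.1 hxA else h x hxA hx, fun h x _ hx => h hx⟩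

theorem isBooleanOccPoset_of_injective (h : Function.Injective (occMk τ A univ)) :
    IsBooleanOccPoset τ A univ := by
  let E := Equiv.ofBijective _ ⟨h, Quot.exists_rep⟩
  have hle : ∀ q q', occLE τ A univ q q' ↔ (E.symm q).1 ⊆ (E.symm q').1 := by
    refine fun q q' => ⟨?_, fun hsub => ⟨_, _, (E.apply_symm_apply q).symm,
      (E.apply_symm_apply q').symm, hsub⟩⟩
    rintro ⟨S, S', rfl, rfl, hSS'⟩
    convert hSS' using 2 <;> exact congrArg Subtype.val (E.symm_apply_apply _)
  refine ⟨_, E.symm.trans ((occCarrierEquivFinsetCompl A).trans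
    (Fintype.equivFin _).finsetCongr), fun q q' => ?_⟩
  simp [hle, Equiv.finsetCongr_apply, occCarrierEquivFinsetCompl_subset_iff]

theorem isBooleanOccPoset_iff_forall_not_similarPos :
    IsBooleanOccPoset τ A univ ↔ ∀ p q, ¬ SimilarPos τ A p q :=
  ⟨fun hB _ _ h => h.not_isBooleanOccPoset hB, fun hno => isBooleanOccPoset_of_injective
    fun S _ h => Subtype.ext ((occMk_eq_iff.1 h).eq_of_forall_not_similarPos hno S.2.1)⟩

theorem exists_hasAdjacentPair_iff_exists_similarPos :
    (∃ S : OccCarrier A univ, HasAdjacentPair τ A S.1) ↔ ∃ p q, SimilarPos τ A p q :=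
  ⟨fun ⟨S, hS⟩ => hS.exists_similarPos S.2.1, fun ⟨_, _, h⟩ =>
    ⟨⟨_, (subset_insert _ _).trans (subset_insert _ _), subset_univ _⟩, h.hasAdjacentPair⟩⟩

end OccurrencePoset

theorem occurrence_poset_boolean_iff_no_adjacent_pair_general {n : ℕ}
    (τ : Equiv.Perm (Fin n))
    (A : Finset (Fin n)) :
    IsBooleanOccPoset τ A Finset.univ ↔
      ∀ S : OccCarrier A Finset.univ, ¬ HasAdjacentPair τ A S.1 := by
  rw [isBooleanOccPoset_iff_forall_not_similarPos]
  simpa using exists_hasAdjacentPair_iff_exists_similarPos.not.symm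

/-- the occurrence poset `[⟨σ⟩, τ]` is a boolean algebra if and only if at
no point are there letters `x` and `x + 1` adjacent in `ρ ∖ ⟨σ⟩` for some `ρ ∈ [⟨σ⟩, τ]`. -/
theorem occurrence_poset_boolean_iff_no_adjacent_pair {k n : ℕ}
    (σ : Equiv.Perm (Fin k)) (τ : Equiv.Perm (Fin n))
    (f : Fin k → Fin n) (hf : IsOccurrence σ τ f)
    (A : Finset (Fin n)) (hA : A = Finset.image f Finset.univ) :
    IsBooleanOccPoset τ A Finset.univ ↔
      ∀ S : OccCarrier A Finset.univ, ¬ HasAdjacentPair τ A S.1 :=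
  occurrence_poset_boolean_iff_no_adjacent_pair_general τ A
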